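/- Let a, a′ > 0, a″ ≥ 0, β > 0. Let f be an exponentially distributed random variable with rate β and let g be a random variable independent of f taking values in the positive integers. Define c = a·f + a′·g + a″. Then for every real x ≥ a′ + a″: P(c ≤ x) = Σ_{k=1}^{⌊(x−a″)/a′⌋} (1 − e^(−β(x−a″−a′k)/a)) · P(g = k). -/

import Mathlib

open MeasureTheory ProbabilityTheory Real Set
open scoped ENNReal

/-!
Since `a > 0`, the event `c ≤ x` is `f ≤ t(g)` with `t(k) = (x - a″ - a′k)/a`. Conditioning on the
value of the independent variable `g` gives `P(c ≤ x) = ∑ₖ F(t(k)) P(g = k)`, where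
`F(s) = (1 - e^{-βs})⁺` is the exponential CDF. The term `k = 0` vanishes because `g ≥ 1`, and the
terms with `k > ⌊(x - a″)/a′⌋` vanish because then `t(k) < 0`.
-/

lemma ofReal_one_sub_exp_neg_mul_eq_zero {β s : ℝ} (hβ : 0 < β) (hs : s ≤ 0) :
    ENNReal.ofReal (1 - exp (-(β * s))) = 0 := by
  have : 1 ≤ exp (-(β * s)) := one_le_exp (by nlinarith)
  rw [ENNReal.ofReal_eq_zero]
  linarith

lemma measure_preimage_Iic_of_map_eq_exponential {Ω : Type*} [MeasurableSpace Ω] {μ : Measure Ω}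
    {f : Ω → ℝ} (hf : Measurable f) {β : ℝ} (hβ : 0 < β)
    (hfexp : μ.map f = volume.withDensity (exponentialPDF β)) (s : ℝ) :
    μ (f ⁻¹' Iic s) = ENNReal.ofReal (1 - exp (-(β * s))) := by
  rw [← Measure.map_apply hf measurableSet_Iic, hfexp, withDensity_apply _ measurableSet_Iic,
    lintegral_exponentialPDF_eq_antiDeriv hβ s]
  split_ifs with hs
  · rfl
  · rw [ENNReal.ofReal_zero, ofReal_one_sub_exp_neg_mul_eq_zero hβ (not_le.1 hs).le]

lemma ProbabilityTheory.IndepFun.measure_setOf_mem_eq_tsum {Ω α : Type*} [MeasurableSpace Ω]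
    [MeasurableSpace α]
    {μ : Measure Ω} {f : Ω → α} {g : Ω → ℕ} (hfg : IndepFun f g μ) (hf : Measurable f)
    (hg : Measurable g) {S : ℕ → Set α} (hS : ∀ k, MeasurableSet (S k)) :
    μ {ω | f ω ∈ S (g ω)} = ∑' k, μ (f ⁻¹' S k) * μ {ω | g ω = k} := by
  have hunion : {ω | f ω ∈ S (g ω)} = ⋃ k, f ⁻¹' S k ∩ g ⁻¹' {k} := by
    ext ω
    simp
  have hdisj : Pairwise (Function.onFun Disjoint fun k => f ⁻¹' S k ∩ g ⁻¹' {k}) :=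
    fun i j hij => Set.disjoint_left.2 fun _ hi hj => hij (hi.2.symm.trans hj.2)
  rw [hunion, measure_iUnion hdisj fun k => (hf (hS k)).inter (hg (measurableSet_singleton k))]
  exact tsum_congr fun k => hfg.measure_inter_preimage_eq_mul _ _ (hS k) (measurableSet_singleton k)

lemma sub_mul_neg_of_floor_div_lt {y c : ℝ} (hc : 0 < c) {k : ℕ} (hk : ⌊y / c⌋₊ < k) :
    y - c * k < 0 := by
  have : y / c < k := (Nat.lt_floor_add_one _).trans_le (by exact_mod_cast hk)
  rw [div_lt_iff₀ hc] at this
  linarith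

theorem cost_cdf_general {Ω : Type*} [MeasurableSpace Ω]
    (μ : Measure Ω)
    (a a' a'' β : ℝ) (ha : 0 < a) (ha' : 0 < a') (hβ : 0 < β)
    (f : Ω → ℝ) (g : Ω → ℕ)
    (hfmeas : Measurable f) (hgmeas : Measurable g)
    (hfexp : Measure.map f μ = volume.withDensity (exponentialPDF β))
    (hgpos : ∀ ω, 1 ≤ g ω)
    (hindep : IndepFun f g μ)
    (x : ℝ) :
    μ {ω | a * f ω + a' * (g ω : ℝ) + a'' ≤ x} =
      ∑ k ∈ Finset.Icc 1 ⌊(x - a'') / a'⌋₊,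
        ENNReal.ofReal (1 - Real.exp (-β * (x - a'' - a' * k) / a)) * μ {ω | g ω = k} := by
  have hevent : {ω | a * f ω + a' * (g ω : ℝ) + a'' ≤ x} =
      {ω | f ω ∈ Iic ((x - a'' - a' * g ω) / a)} := by
    ext ω
    simp only [mem_ofPred_eq, mem_Iic, le_div_iff₀ ha]
    constructor <;> intro <;> linarith
  rw [hevent, hindep.measure_setOf_mem_eq_tsum hfmeas hgmeas
    (S := fun k : ℕ => Iic ((x - a'' - a' * k) / a)) fun _ => measurableSet_Iic]
  simp only [measure_preimage_Iic_of_map_eq_exponential hfmeas hβ hfexp]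
  rw [tsum_eq_sum (s := Finset.Icc 1 ⌊(x - a'') / a'⌋₊)]
  · refine Finset.sum_congr rfl fun k _ => ?_
    congr 4
    ring
  intro k hk
  rcases Nat.eq_zero_or_pos k with rfl | hk0
  · have : {ω | g ω = 0} = ∅ := eq_empty_of_forall_notMem fun ω h =>
      Nat.one_le_iff_ne_zero.mp (hgpos ω) h
    rw [this, measure_empty, mul_zero]
  · rw [Finset.mem_Icc, not_and, not_le] at hk
    have hneg := sub_mul_neg_of_floor_div_lt (y := x - a'') ha' (hk hk0)
    rw [ofReal_one_sub_exp_neg_mul_eq_zero hβ (div_neg_of_neg_of_pos hneg ha).le, zero_mul]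

/-- CDF of the energy cost `c = a·f + a′·g + a″` (proof of Proposition 3): if `f`
is exponential with rate `β` and `g` is an independent positive-integer-valued
random variable, then for `x ≥ a′ + a″`,
`P(c ≤ x) = ∑_{k=1}^{⌊(x-a″)/a′⌋} (1 - e^{-β(x-a″-a′k)/a})·P(g = k)`. -/
theorem cost_cdf {Ω : Type*} [MeasurableSpace Ω]
    (μ : Measure Ω) [IsProbabilityMeasure μ]
    (a a' a'' β : ℝ) (ha : 0 < a) (ha' : 0 < a') (ha'' : 0 ≤ a'') (hβ : 0 < β)
    (f : Ω → ℝ) (g : Ω → ℕ)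
    (hfmeas : Measurable f) (hgmeas : Measurable g)
    (hfexp : Measure.map f μ = volume.withDensity (exponentialPDF β))
    (hgpos : ∀ ω, 1 ≤ g ω)
    (hindep : IndepFun f g μ)
    (x : ℝ) (hx : a' + a'' ≤ x) :
    μ {ω | a * f ω + a' * (g ω : ℝ) + a'' ≤ x} =
      ∑ k ∈ Finset.Icc 1 ⌊(x - a'') / a'⌋₊,
        ENNReal.ofReal (1 - Real.exp (-β * (x - a'' - a' * k) / a)) * μ {ω | g ω = k} :=
  cost_cdf_general μ a a' a'' β ha ha' hβ f g hfmeas hgmeas hfexp hgpos hindep x
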